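/- Let k be a field, M_0, ..., M_m symmetric (n+1)×(n+1) matrices over k, and M(X) = X_0 M_0 + ... + X_m M_m. Define F_Q := { P ∈ GL_{n+1}(k) : ∃ u ∈ k^×, ᵗP M(X) P = u·M(X) } and let L_0 be the algebra of pairs (P, P') with ᵗP M(X) = M(X) P', with anti-involution σ(P,P') = (P',P). Then the map P ↦ (P, u P^{-1}) (where u is the associated scalar) defines a group isomorphism from F_Q onto { l ∈ L_0^× : σ(l)·l ∈ k^×·(I,I) }. -/

import Mathlib

open Matrix MvPolynomial

/-- The symmetric matrix of linear forms `M(X) = X_0 M_0 + ... + X_m M_m`. -/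
noncomputable def MX {k : Type*} [Field k] (m n : ℕ)
    (M : Fin (m + 1) → Matrix (Fin (n + 1)) (Fin (n + 1)) k) :
    Matrix (Fin (n + 1)) (Fin (n + 1)) (MvPolynomial (Fin (m + 1)) k) :=
  ∑ i, (X i : MvPolynomial (Fin (m + 1)) k) •
    (M i).map (fun a => (C a : MvPolynomial (Fin (m + 1)) k))

/-- Mapping a matrix over `k` to a matrix over `k[X_0, ..., X_m]`. -/
noncomputable def polyMat {k : Type*} [Field k] (m n : ℕ)
    (N : Matrix (Fin (n + 1)) (Fin (n + 1)) k) :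
    Matrix (Fin (n + 1)) (Fin (n + 1)) (MvPolynomial (Fin (m + 1)) k) :=
  N.map (fun a => (C a : MvPolynomial (Fin (m + 1)) k))

/-- Pairs of square matrices of size `n+1`. -/
abbrev MatPair (k : Type*) [Field k] (n : ℕ) :=
  Matrix (Fin (n + 1)) (Fin (n + 1)) k × Matrix (Fin (n + 1)) (Fin (n + 1)) k

/-- The multiplication `(P₁,P'₁) ∘ (P₂,P'₂) = (P₂P₁, P'₁P'₂)` on `L₀`. -/
def lmul {k : Type*} [Field k] (n : ℕ) (p q : MatPair k n) : MatPair k n :=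
  (q.1 * p.1, p.2 * q.2)

/-
For invertible `P`, the similitude relation `ᵗP M(X) P = u M(X)` is equivalent to
`ᵗP M(X) = M(X) (u P⁻¹)`, i.e. to `(P, u P⁻¹) ∈ L₀`, and then `σ(l) l = (u I, u I)`. Conversely, if
`(P, P') ∈ L₀` and `P P' = w I` with `w ≠ 0`, then `P` is invertible with `P' = w P⁻¹`, so `P`
is a similitude with multiplier `w`. Multiplicativity is `(u P⁻¹)(v Q⁻¹) = uv (QP)⁻¹`.
-/

section MatrixAlgebra

variable {ι R : Type*} [Fintype ι] [DecidableEq ι] [CommRing R]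

theorem Matrix.transpose_mul_eq_mul_smul_of_mul_eq_one {P Q N : Matrix ι ι R} {c : R}
    (h : Pᵀ * N * P = c • N) (hPQ : P * Q = 1) : Pᵀ * N = N * (c • Q) :=
  calc Pᵀ * N = Pᵀ * N * P * Q := by rw [Matrix.mul_assoc _ P, hPQ, Matrix.mul_one]
    _ = N * (c • Q) := by rw [h, Matrix.smul_mul, Matrix.mul_smul]

theorem Matrix.transpose_mul_mul_eq_smul_of_transpose_mul_eq {P Q N : Matrix ι ι R} {c : R}
    (h : Pᵀ * N = N * Q) (hQP : Q * P = c • 1) : Pᵀ * N * P = c • N := by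
  rw [h, Matrix.mul_assoc, hQP, Matrix.mul_smul, Matrix.mul_one]

theorem Matrix.isUnit_det_of_mul_eq_smul_one {A B : Matrix ι ι R} (w : Rˣ)
    (h : A * B = (w : R) • 1) : IsUnit A.det :=
  Matrix.isUnit_det_of_right_inverse (B := (↑w⁻¹ : R) • B) <| by
    rw [Matrix.mul_smul, h, smul_smul, Units.inv_mul, one_smul]

theorem Matrix.eq_smul_inv_of_mul_eq_smul_one {A B : Matrix ι ι R} (w : Rˣ)
    (h : A * B = (w : R) • 1) : B = (w : R) • A⁻¹ := by
  have hinv : A⁻¹ = (↑w⁻¹ : R) • B := Matrix.inv_eq_right_inv <| by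
    rw [Matrix.mul_smul, h, smul_smul, Units.inv_mul, one_smul]
  rw [hinv, smul_smul, Units.mul_inv, one_smul]

theorem Matrix.smul_inv_mul_smul_inv (P Q : Matrix ι ι R) (u v : R) :
    (u • P⁻¹) * (v • Q⁻¹) = (u * v) • (Q * P)⁻¹ := by
  rw [Matrix.mul_inv_rev, Matrix.smul_mul, Matrix.mul_smul, smul_smul]

end MatrixAlgebra

section PolyMat

variable {k : Type*} [Field k] (m n : ℕ)

theorem polyMat_eq_mapMatrix (N : Matrix (Fin (n + 1)) (Fin (n + 1)) k) :
    polyMat m n N = (C : k →+* MvPolynomial (Fin (m + 1)) k).mapMatrix N := rfl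

theorem polyMat_mul (A B : Matrix (Fin (n + 1)) (Fin (n + 1)) k) :
    polyMat m n (A * B) = polyMat m n A * polyMat m n B := by
  simp only [polyMat_eq_mapMatrix, map_mul]

theorem polyMat_one : polyMat m n (1 : Matrix (Fin (n + 1)) (Fin (n + 1)) k) = 1 :=
  map_one (C : k →+* MvPolynomial (Fin (m + 1)) k).mapMatrix

theorem polyMat_smul (c : k) (A : Matrix (Fin (n + 1)) (Fin (n + 1)) k) :
    polyMat m n (c • A) = (C c : MvPolynomial (Fin (m + 1)) k) • polyMat m n A := by
  ext i j
  simp [polyMat]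

end PolyMat

theorem stmt14_general {k : Type*} [Field k] (m n : ℕ)
    (M : Fin (m + 1) → Matrix (Fin (n + 1)) (Fin (n + 1)) k) :
    -- P ↦ (P, u P⁻¹) lands in { l ∈ L₀ˣ : σ(l)·l ∈ k^×·(I,I) }
    (∀ (P : Matrix (Fin (n + 1)) (Fin (n + 1)) k) (u : kˣ), IsUnit P.det →
      (polyMat m n P)ᵀ * MX m n M * polyMat m n P = (C (u : k) : MvPolynomial (Fin (m + 1)) k) • MX m n M →
      ((polyMat m n P)ᵀ * MX m n M = MX m n M * polyMat m n ((u : k) • P⁻¹)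
        ∧ P * ((u : k) • P⁻¹) = (u : k) • (1 : Matrix (Fin (n + 1)) (Fin (n + 1)) k)
        ∧ ((u : k) • P⁻¹) * P = (u : k) • (1 : Matrix (Fin (n + 1)) (Fin (n + 1)) k)))
    -- the map is surjective onto that set
    ∧ (∀ l : MatPair k n,
        (polyMat m n l.1)ᵀ * MX m n M = MX m n M * polyMat m n l.2 →
        (∃ w : kˣ, l.1 * l.2 = (w : k) • (1 : Matrix (Fin (n + 1)) (Fin (n + 1)) k)) →
        ∃ (P : Matrix (Fin (n + 1)) (Fin (n + 1)) k) (u : kˣ), IsUnit P.det ∧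
          (polyMat m n P)ᵀ * MX m n M * polyMat m n P = (C (u : k) : MvPolynomial (Fin (m + 1)) k) • MX m n M ∧
          l = (P, (u : k) • P⁻¹))
    -- the map is injective
    ∧ (∀ (P Q : Matrix (Fin (n + 1)) (Fin (n + 1)) k) (u v : kˣ),
        IsUnit P.det → IsUnit Q.det →
        (polyMat m n P)ᵀ * MX m n M * polyMat m n P = (C (u : k) : MvPolynomial (Fin (m + 1)) k) • MX m n M →
        (polyMat m n Q)ᵀ * MX m n M * polyMat m n Q = (C (v : k) : MvPolynomial (Fin (m + 1)) k) • MX m n M →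
        ((P, (u : k) • P⁻¹) : MatPair k n) = (Q, (v : k) • Q⁻¹) → P = Q)
    -- the map is compatible with the group laws
    ∧ (∀ (P Q : Matrix (Fin (n + 1)) (Fin (n + 1)) k) (u v : kˣ),
        IsUnit P.det → IsUnit Q.det →
        (polyMat m n P)ᵀ * MX m n M * polyMat m n P = (C (u : k) : MvPolynomial (Fin (m + 1)) k) • MX m n M →
        (polyMat m n Q)ᵀ * MX m n M * polyMat m n Q = (C (v : k) : MvPolynomial (Fin (m + 1)) k) • MX m n M →
        ((Q * P, ((u * v : kˣ) : k) • (Q * P)⁻¹) : MatPair k n)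
          = lmul n (P, (u : k) • P⁻¹) (Q, (v : k) • Q⁻¹)) := by
  refine ⟨fun P u hP hPM => ⟨?_, ?_, ?_⟩, fun ⟨A, B⟩ hAB ⟨w, hw⟩ => ?_,
    fun P Q u v _ _ _ _ h => (Prod.mk.inj h).1, fun P Q u v _ _ _ _ => ?_⟩
  · rw [polyMat_smul]
    refine Matrix.transpose_mul_eq_mul_smul_of_mul_eq_one hPM ?_
    rw [← polyMat_mul, Matrix.mul_nonsing_inv P hP, polyMat_one]
  · rw [Matrix.mul_smul, Matrix.mul_nonsing_inv P hP]
  · rw [Matrix.smul_mul, Matrix.nonsing_inv_mul P hP]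
  · have hA : IsUnit A.det := Matrix.isUnit_det_of_mul_eq_smul_one w hw
    have hB : B = (w : k) • A⁻¹ := Matrix.eq_smul_inv_of_mul_eq_smul_one w hw
    have hBA : B * A = (w : k) • 1 := by rw [hB, Matrix.smul_mul, Matrix.nonsing_inv_mul A hA]
    refine ⟨A, w, hA, ?_, by rw [← hB]⟩
    refine Matrix.transpose_mul_mul_eq_smul_of_transpose_mul_eq hAB ?_
    rw [← polyMat_mul, hBA, polyMat_smul, polyMat_one]
  · simp only [lmul, Units.val_mul, Matrix.smul_inv_mul_smul_inv]

theorem stmt14 {k : Type*} [Field k] (m n : ℕ)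
    (M : Fin (m + 1) → Matrix (Fin (n + 1)) (Fin (n + 1)) k)
    (hsym : ∀ i, (M i).IsSymm) :
    -- P ↦ (P, u P⁻¹) lands in { l ∈ L₀ˣ : σ(l)·l ∈ k^×·(I,I) }
    (∀ (P : Matrix (Fin (n + 1)) (Fin (n + 1)) k) (u : kˣ), IsUnit P.det →
      (polyMat m n P)ᵀ * MX m n M * polyMat m n P = (C (u : k) : MvPolynomial (Fin (m + 1)) k) • MX m n M →
      ((polyMat m n P)ᵀ * MX m n M = MX m n M * polyMat m n ((u : k) • P⁻¹)
        ∧ P * ((u : k) • P⁻¹) = (u : k) • (1 : Matrix (Fin (n + 1)) (Fin (n + 1)) k)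
        ∧ ((u : k) • P⁻¹) * P = (u : k) • (1 : Matrix (Fin (n + 1)) (Fin (n + 1)) k)))
    -- the map is surjective onto that set
    ∧ (∀ l : MatPair k n,
        (polyMat m n l.1)ᵀ * MX m n M = MX m n M * polyMat m n l.2 →
        (∃ w : kˣ, l.1 * l.2 = (w : k) • (1 : Matrix (Fin (n + 1)) (Fin (n + 1)) k)) →
        ∃ (P : Matrix (Fin (n + 1)) (Fin (n + 1)) k) (u : kˣ), IsUnit P.det ∧
          (polyMat m n P)ᵀ * MX m n M * polyMat m n P = (C (u : k) : MvPolynomial (Fin (m + 1)) k) • MX m n M ∧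
          l = (P, (u : k) • P⁻¹))
    -- the map is injective
    ∧ (∀ (P Q : Matrix (Fin (n + 1)) (Fin (n + 1)) k) (u v : kˣ),
        IsUnit P.det → IsUnit Q.det →
        (polyMat m n P)ᵀ * MX m n M * polyMat m n P = (C (u : k) : MvPolynomial (Fin (m + 1)) k) • MX m n M →
        (polyMat m n Q)ᵀ * MX m n M * polyMat m n Q = (C (v : k) : MvPolynomial (Fin (m + 1)) k) • MX m n M →
        ((P, (u : k) • P⁻¹) : MatPair k n) = (Q, (v : k) • Q⁻¹) → P = Q)
    -- the map is compatible with the group laws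
    ∧ (∀ (P Q : Matrix (Fin (n + 1)) (Fin (n + 1)) k) (u v : kˣ),
        IsUnit P.det → IsUnit Q.det →
        (polyMat m n P)ᵀ * MX m n M * polyMat m n P = (C (u : k) : MvPolynomial (Fin (m + 1)) k) • MX m n M →
        (polyMat m n Q)ᵀ * MX m n M * polyMat m n Q = (C (v : k) : MvPolynomial (Fin (m + 1)) k) • MX m n M →
        ((Q * P, ((u * v : kˣ) : k) • (Q * P)⁻¹) : MatPair k n)
          = lmul n (P, (u : k) • P⁻¹) (Q, (v : k) • Q⁻¹)) :=
  stmt14_general m n M
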